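/- Under the hypotheses of Theorem 1 (γ a T-periodic hyperbolic limit cycle, so κ = (1/T)∫₀ᵀ div X(γ) dt ≠ 0), for |ε| > 0 sufficiently small the closed curve z_ε(t) = γ(t) + ε u(t)(γ'(t))⊥ satisfies X(z_ε(t)) · (z_ε'(t))⊥ ≠ 0 for all t ∈ [0, T], i.e., z_ε is strictly transversal to the flow of X. -/

import Mathlib

/-!
Put `Φ(ε, t) = X(z_ε(t)) · z_ε'(t)⊥`. Since `γ` is a solution, `Φ(0, t) = X(γ) · (γ')⊥ = 0`.
Differentiating in `ε` at `0` and using `det(A x, y) + det(x, A y) = tr A · det(x, y)` together with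
`u ‖γ'‖² = E`, `E' = E (div X(γ) - κ)`, one finds `∂_ε Φ(0, t) = κ E(t)`, which never vanishes.
By compactness of `[0, T]` the derivative `∂_ε Φ` stays nonzero on `(-ε₀, ε₀) × [0, T]`, and then
Rolle's theorem in `ε` forbids a second zero of `Φ(·, t)` besides `ε = 0`.
-/

open Topology

/-- `cross a b = a · b⊥`, the paper's scalar product with `(a, b)⊥ = (b, -a)`. -/
def cross (a b : ℝ × ℝ) : ℝ := a.1 * b.2 - a.2 * b.1

def perp (v : ℝ × ℝ) : ℝ × ℝ := (v.2, -v.1)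

@[fun_prop]
lemma Continuous.cross {Y : Type*} [TopologicalSpace Y] {f g : Y → ℝ × ℝ} (hf : Continuous f)
    (hg : Continuous g) : Continuous fun y => cross (f y) (g y) := by
  unfold _root_.cross
  fun_prop

@[fun_prop]
lemma Continuous.perp {Y : Type*} [TopologicalSpace Y] {f : Y → ℝ × ℝ} (hf : Continuous f) :
    Continuous fun y => perp (f y) := by
  unfold _root_.perp
  fun_prop

lemma cross_map_add_cross_map (A : ℝ × ℝ →L[ℝ] ℝ × ℝ) (x y : ℝ × ℝ) :
    cross (A x) y + cross x (A y) = ((A (1, 0)).1 + (A (0, 1)).2) * cross x y := by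
  have hA : ∀ v : ℝ × ℝ, A v = v.1 • A (1, 0) + v.2 • A (0, 1) := fun v => by
    rw [← map_smul, ← map_smul, ← map_add]
    simp
  rw [hA x, hA y]
  simp only [cross, Prod.fst_add, Prod.snd_add, Prod.smul_fst, Prod.smul_snd, smul_eq_mul]
  ring

lemma fst_sq_add_snd_sq_ne_zero {v : ℝ × ℝ} (hv : v ≠ 0) : v.1 ^ 2 + v.2 ^ 2 ≠ 0 := by
  have h1 := sq_nonneg v.1
  have h2 := sq_nonneg v.2
  contrapose! hv
  exact Prod.ext (pow_eq_zero_iff two_ne_zero |>.1 (by linarith))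
    (pow_eq_zero_iff two_ne_zero |>.1 (by linarith))

section Derivatives

variable {f g : ℝ → ℝ × ℝ} {f' g' : ℝ × ℝ} {x : ℝ}

lemma HasDerivAt.fst (hf : HasDerivAt f f' x) : HasDerivAt (fun t => (f t).1) f'.1 x :=
  (ContinuousLinearMap.fst ℝ ℝ ℝ).hasFDerivAt.comp_hasDerivAt x hf

lemma HasDerivAt.snd (hf : HasDerivAt f f' x) : HasDerivAt (fun t => (f t).2) f'.2 x :=
  (ContinuousLinearMap.snd ℝ ℝ ℝ).hasFDerivAt.comp_hasDerivAt x hf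

lemma HasDerivAt.perp (hf : HasDerivAt f f' x) : HasDerivAt (fun t => perp (f t)) (perp f') x :=
  hf.snd.prodMk hf.fst.neg

lemma HasDerivAt.cross (hf : HasDerivAt f f' x) (hg : HasDerivAt g g' x) :
    HasDerivAt (fun t => cross (f t) (g t)) (cross f' (g x) + cross (f x) g') x :=
  ((hf.fst.mul hg.snd).sub (hf.snd.mul hg.fst)).congr_deriv (by unfold _root_.cross; ring)

end Derivatives

lemma contDiff_one_of_hasDerivAt {F : Type*} [NormedAddCommGroup F] [NormedSpace ℝ F]
    {f f' : ℝ → F} (hf : ∀ t, HasDerivAt f (f' t) t) (hf' : Continuous f') : ContDiff ℝ 1 f :=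
  contDiff_one_iff_deriv.2
    ⟨fun t => (hf t).differentiableAt, by rwa [show deriv f = f' from funext fun t => (hf t).deriv]⟩

lemma hasDerivAt_exp_integral_sub_mul {f : ℝ → ℝ} (hf : Continuous f) (κ t : ℝ) :
    HasDerivAt (fun t => Real.exp ((∫ s in (0 : ℝ)..t, f s) - κ * t))
      (Real.exp ((∫ s in (0 : ℝ)..t, f s) - κ * t) * (f t - κ)) t := by
  simpa using ((hf.integral_hasStrictDerivAt 0 t).hasDerivAt.fun_sub
    ((hasDerivAt_id t).const_mul κ)).exp

section Solution

variable {X : ℝ × ℝ → ℝ × ℝ} {γ γ' : ℝ → ℝ × ℝ}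

lemma hasDerivAt_velocity (hX : Differentiable ℝ X) (hγ : ∀ t, HasDerivAt γ (γ' t) t)
    (hsol : ∀ t, γ' t = X (γ t)) (t : ℝ) : HasDerivAt γ' (fderiv ℝ X (γ t) (γ' t)) t :=
  ((hX (γ t)).hasFDerivAt.comp_hasDerivAt t (hγ t)).congr_of_eventuallyEq (.of_forall hsol)

lemma contDiff_velocity (hX : ContDiff ℝ 1 X) (hγ : ∀ t, HasDerivAt γ (γ' t) t)
    (hsol : ∀ t, γ' t = X (γ t)) : ContDiff ℝ 1 γ' := by
  have hγc : Continuous γ := continuous_iff_continuousAt.2 fun t => (hγ t).continuousAt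
  rw [funext hsol] at hγ ⊢
  exact hX.comp (contDiff_one_of_hasDerivAt hγ (by fun_prop))

end Solution

lemma exists_abs_lt_hasDerivAt_eq_zero {f f' : ℝ → ℝ} {ε : ℝ} (hε : ε ≠ 0)
    (hf : ∀ x, HasDerivAt f (f' x) x) (hf0 : f 0 = 0) (hfε : f ε = 0) :
    ∃ c, |c| < |ε| ∧ f' c = 0 := by
  have hfc : Continuous f := continuous_iff_continuousAt.2 fun x => (hf x).continuousAt
  rcases hε.lt_or_gt with hneg | hpos
  · obtain ⟨c, hc, hc0⟩ := exists_hasDerivAt_eq_zero hneg hfc.continuousOn (hfε.trans hf0.symm)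
      fun x _ => hf x
    refine ⟨c, ?_, hc0⟩
    rw [abs_of_neg hneg, abs_lt]
    exact ⟨by linarith [hc.1], by linarith [hc.2]⟩
  · obtain ⟨c, hc, hc0⟩ := exists_hasDerivAt_eq_zero hpos hfc.continuousOn (hf0.trans hfε.symm)
      fun x _ => hf x
    refine ⟨c, ?_, hc0⟩
    rw [abs_of_pos hpos, abs_lt]
    exact ⟨by linarith [hc.1], hc.2⟩

theorem exists_forall_ne_zero_of_hasDerivAt {Y : Type*} [TopologicalSpace Y] {K : Set Y}
    (hK : IsCompact K) {Φ S : ℝ → Y → ℝ} (hΦ : ∀ e, ∀ y ∈ K, HasDerivAt (Φ · y) (S e y) e)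
    (hΦ0 : ∀ y ∈ K, Φ 0 y = 0) (hS : Continuous (Function.uncurry S))
    (hS0 : ∀ y ∈ K, S 0 y ≠ 0) :
    ∃ ε₀ > (0 : ℝ), ∀ ε : ℝ, ε ≠ 0 → |ε| < ε₀ → ∀ y ∈ K, Φ ε y ≠ 0 := by
  have hnear : ∀ᶠ e in 𝓝 (0 : ℝ), ∀ y ∈ K, S e y ≠ 0 :=
    hK.eventually_forall_of_forall_eventually fun y hy => hS.continuousAt.eventually_ne (hS0 y hy)
  obtain ⟨ε₀, hε₀, hball⟩ := Metric.eventually_nhds_iff.1 hnear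
  refine ⟨ε₀, hε₀, fun ε hε hεε₀ y hy hΦε => ?_⟩
  obtain ⟨c, hc, hSc⟩ := exists_abs_lt_hasDerivAt_eq_zero hε (fun e => hΦ e y hy) (hΦ0 y hy) hΦε
  exact hball (by simpa [Real.dist_eq] using hc.trans hεε₀) y hy hSc

theorem exists_forall_cross_ne_zero {X : ℝ × ℝ → ℝ × ℝ} (hX : ContDiff ℝ 1 X)
    {Y : Type*} [TopologicalSpace Y] {K : Set Y} (hK : IsCompact K) {γ N N' : Y → ℝ × ℝ}
    (hγ : Continuous γ) (hN : Continuous N) (hN' : Continuous N')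
    (h : ∀ y ∈ K, cross (fderiv ℝ X (γ y) (N y)) (X (γ y)) + cross (X (γ y)) (N' y) ≠ 0) :
    ∃ ε₀ > (0 : ℝ), ∀ ε : ℝ, ε ≠ 0 → |ε| < ε₀ → ∀ y ∈ K,
      cross (X (γ y + ε • N y)) (X (γ y) + ε • N' y) ≠ 0 := by
  have hXd : Differentiable ℝ X := hX.differentiable (by norm_num)
  refine exists_forall_ne_zero_of_hasDerivAt hK
    (S := fun e y => cross (fderiv ℝ X (γ y + e • N y) (N y)) (X (γ y) + e • N' y) +
      cross (X (γ y + e • N y)) (N' y)) (fun e y _ => ?_) (fun y _ => by simp [cross, mul_comm]) ?_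
    (fun y hy => by simpa [Function.uncurry] using h y hy)
  · have hline : HasDerivAt (fun e : ℝ => γ y + e • N y) (N y) e := by
      simpa using ((hasDerivAt_id e).smul_const (N y)).const_add (γ y)
    have haff : HasDerivAt (fun e : ℝ => X (γ y) + e • N' y) (N' y) e := by
      simpa using ((hasDerivAt_id e).smul_const (N' y)).const_add (X (γ y))
    exact ((hXd _).hasFDerivAt.comp_hasDerivAt e hline).cross haff
  · fun_prop

/-- The `ε`-derivative at `ε = 0` of `X(γ + ε u v⊥) · ((γ + ε u v⊥)')⊥`, where `A = DX(γ(t))`. -/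
lemma cross_perp_first_order {A : ℝ × ℝ →L[ℝ] ℝ × ℝ} {v : ℝ → ℝ × ℝ} {u E : ℝ → ℝ}
    {u' κ t : ℝ} (hv : HasDerivAt v (A (v t)) t) (hu : HasDerivAt u u' t)
    (hE : HasDerivAt E (E t * ((A (1, 0)).1 + (A (0, 1)).2 - κ)) t)
    (huE : ∀ s, E s = u s * ((v s).1 ^ 2 + (v s).2 ^ 2)) :
    cross (A (u t • perp (v t))) (v t) + cross (v t) (u' • perp (v t) + u t • perp (A (v t))) =
      κ * E t := by
  -- differentiating `E = u ‖v‖²` and comparing with `hE` pins down `u'`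
  have hE' : HasDerivAt E (u' * ((v t).1 ^ 2 + (v t).2 ^ 2) +
      u t * (2 * (v t).1 * (A (v t)).1 + 2 * (v t).2 * (A (v t)).2)) t := by
    rw [funext huE]
    exact (hu.fun_mul ((hv.fst.fun_pow 2).fun_add (hv.snd.fun_pow 2))).congr_deriv
      (by push_cast; ring)
  have hu' := hE.unique hE'
  have hJ := cross_map_add_cross_map A (perp (v t)) (v t)
  rw [map_smul, huE t] at *
  simp only [cross, perp, Prod.smul_fst, Prod.smul_snd, Prod.fst_add, Prod.snd_add,
    smul_eq_mul] at *
  linear_combination u t * hJ + hu'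

theorem exists_forall_offset_cross_ne_zero {X : ℝ × ℝ → ℝ × ℝ} (hX : ContDiff ℝ 1 X)
    {γ γ' : ℝ → ℝ × ℝ} (hγ : ∀ t, HasDerivAt γ (γ' t) t) (hsol : ∀ t, γ' t = X (γ t))
    {u : ℝ → ℝ} (hu : ContDiff ℝ 1 u) {z : ℝ → ℝ → ℝ × ℝ}
    (hz : ∀ ε s, z ε s = γ s + ε • (u s • perp (γ' s))) {K : Set ℝ} (hK : IsCompact K)
    (h : ∀ t ∈ K, cross (fderiv ℝ X (γ t) (u t • perp (γ' t))) (γ' t) +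
      cross (γ' t) (deriv u t • perp (γ' t) + u t • perp (fderiv ℝ X (γ t) (γ' t))) ≠ 0) :
    ∃ ε₀ > (0 : ℝ), ∀ ε : ℝ, ε ≠ 0 → |ε| < ε₀ → ∀ t ∈ K,
      (X (z ε t)).1 * deriv (fun s => (z ε s).2) t -
        (X (z ε t)).2 * deriv (fun s => (z ε s).1) t ≠ 0 := by
  have hγc : Continuous γ := continuous_iff_continuousAt.2 fun t => (hγ t).continuousAt
  have hγ'C : ContDiff ℝ 1 γ' := contDiff_velocity hX hγ hsol
  have hNd : ∀ t, HasDerivAt (fun s => u s • perp (γ' s))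
      (deriv u t • perp (γ' t) + u t • perp (fderiv ℝ X (γ t) (γ' t))) t := fun t =>
    ((hu.differentiable (by norm_num) t).hasDerivAt.fun_smul
      (hasDerivAt_velocity (hX.differentiable (by norm_num)) hγ hsol t).perp).congr_deriv
      (add_comm _ _)
  obtain ⟨ε₀, hε₀, htrans⟩ := exists_forall_cross_ne_zero hX hK hγc
    (N := fun t => u t • perp (γ' t)) (by fun_prop)
    (N' := fun t => deriv u t • perp (γ' t) + u t • perp (fderiv ℝ X (γ t) (γ' t))) (by fun_prop)
    (by simpa only [← hsol] using h)
  refine ⟨ε₀, hε₀, fun ε hε hεε₀ t ht => ?_⟩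
  have hzd : HasDerivAt (z ε)
      (γ' t + ε • (deriv u t • perp (γ' t) + u t • perp (fderiv ℝ X (γ t) (γ' t)))) t := by
    rw [funext (hz ε)]
    exact (hγ t).fun_add ((hNd t).const_smul ε)
  rw [hzd.fst.deriv, hzd.snd.deriv, hz]
  simpa [cross, hsol] using htrans ε hε hεε₀ t ht

theorem stmt_4_general (T : ℝ)
    (X : ℝ × ℝ → ℝ × ℝ) (hX : ContDiff ℝ 2 X)
    (divX : ℝ × ℝ → ℝ)
    (hdiv : ∀ z : ℝ × ℝ, divX z = (fderiv ℝ X z (1, 0)).1 + (fderiv ℝ X z (0, 1)).2)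
    (γ γ' : ℝ → ℝ × ℝ)
    (hγ : ∀ t : ℝ, HasDerivAt γ (γ' t) t)
    (hsol : ∀ t : ℝ, γ' t = X (γ t))
    (hreg : ∀ t : ℝ, γ' t ≠ 0)
    (κ : ℝ)
    (E : ℝ → ℝ)
    (hE : ∀ t : ℝ, E t = Real.exp ((∫ s in (0:ℝ)..t, divX (γ s)) - κ * t))
    (u : ℝ → ℝ)
    (hu : ∀ t : ℝ, u t = E t / ((γ' t).1 ^ 2 + (γ' t).2 ^ 2))
    (z : ℝ → ℝ → ℝ × ℝ)
    (hz : ∀ ε t : ℝ, z ε t =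
      ((γ t).1 + ε * u t * (γ' t).2, (γ t).2 - ε * u t * (γ' t).1))
    (hhyp : κ ≠ 0) :
    ∃ ε₀ > (0:ℝ), ∀ ε : ℝ, ε ≠ 0 → |ε| < ε₀ → ∀ t ∈ Set.Icc (0:ℝ) T,
      (X (z ε t)).1 * (deriv (fun s => (z ε s).2) t) -
        (X (z ε t)).2 * (deriv (fun s => (z ε s).1) t) ≠ 0 := by
  have hX1 : ContDiff ℝ 1 X := hX.of_le (by norm_num)
  have hγc : Continuous γ := continuous_iff_continuousAt.2 fun t => (hγ t).continuousAt
  have hγ'C : ContDiff ℝ 1 γ' := contDiff_velocity hX1 hγ hsol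
  have hdivc : Continuous fun t => divX (γ t) := by
    simp only [hdiv]
    fun_prop
  have hE' : ∀ t, HasDerivAt E (E t * (divX (γ t) - κ)) t := by
    simpa only [← hE, ← funext hE] using hasDerivAt_exp_integral_sub_mul hdivc κ
  have hEc : Continuous E := continuous_iff_continuousAt.2 fun t => (hE' t).continuousAt
  have hnormSq := fun t => fst_sq_add_snd_sq_ne_zero (hreg t)
  have huC : ContDiff ℝ 1 u := by
    rw [funext hu]
    exact (contDiff_one_of_hasDerivAt hE' (hEc.mul (hdivc.sub continuous_const))).div
      (by fun_prop) hnormSq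
  refine exists_forall_offset_cross_ne_zero hX1 hγ hsol huC
    (fun ε s => by rw [hz]; ext <;> simp [perp] <;> ring) isCompact_Icc fun t _ => ?_
  rw [cross_perp_first_order (hasDerivAt_velocity (hX1.differentiable (by norm_num)) hγ hsol t)
    (huC.differentiable (by norm_num) t).hasDerivAt (by simpa only [hdiv] using hE' t)
    fun s => by rw [hu s, div_mul_cancel₀ _ (hnormSq s)]]
  exact mul_ne_zero hhyp (by rw [hE]; positivity)

theorem stmt_4 (T : ℝ) (hT : 0 < T)
    (X : ℝ × ℝ → ℝ × ℝ) (hX : ContDiff ℝ 2 X)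
    (divX : ℝ × ℝ → ℝ)
    (hdiv : ∀ z : ℝ × ℝ, divX z = (fderiv ℝ X z (1, 0)).1 + (fderiv ℝ X z (0, 1)).2)
    (γ γ' : ℝ → ℝ × ℝ)
    (hγ : ∀ t : ℝ, HasDerivAt γ (γ' t) t)
    (hsol : ∀ t : ℝ, γ' t = X (γ t))
    (hper : ∀ t : ℝ, γ (t + T) = γ t)
    (hreg : ∀ t : ℝ, γ' t ≠ 0)
    (κ : ℝ) (hκ : κ = (1 / T) * ∫ t in (0:ℝ)..T, divX (γ t))
    (E : ℝ → ℝ)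
    (hE : ∀ t : ℝ, E t = Real.exp ((∫ s in (0:ℝ)..t, divX (γ s)) - κ * t))
    (u : ℝ → ℝ)
    (hu : ∀ t : ℝ, u t = E t / ((γ' t).1 ^ 2 + (γ' t).2 ^ 2))
    (z : ℝ → ℝ → ℝ × ℝ)
    (hz : ∀ ε t : ℝ, z ε t =
      ((γ t).1 + ε * u t * (γ' t).2, (γ t).2 - ε * u t * (γ' t).1))
    (hhyp : κ ≠ 0) :
    ∃ ε₀ > (0:ℝ), ∀ ε : ℝ, ε ≠ 0 → |ε| < ε₀ → ∀ t ∈ Set.Icc (0:ℝ) T,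
      (X (z ε t)).1 * (deriv (fun s => (z ε s).2) t) -
        (X (z ε t)).2 * (deriv (fun s => (z ε s).1) t) ≠ 0 :=
  stmt_4_general T X hX divX hdiv γ γ' hγ hsol hreg κ E hE u hu z hz hhyp
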